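/- Let g be a finite simple Lie algebra of type A_n, B_n, C_n, D_{n+1}, or G_2, let a ∈ I, and let (ν,J) ∈ RC^{EV}. Then f_a(ν,J) ≠ 0; that is, applying the lowering operator f_a to an extra valid rigged configuration (ν,J) ∈ RC(λ) produces a rigged configuration that is still valid for λ. -/

import Mathlib

/-!
Common framework for formalizing "Connecting marginally large tableaux and
rigged configurations via crystals" (Salisbury–Scrimshaw).

Rigged configurations, vacancy numbers, validity, the Kashiwara operators on
rigged configurations, `RC(∞)`, `RC(λ)`, `λ_ν`, `RC^V`, `RC^{EV}` are all
defined concretely.  The combinatorics of (marginally large / large)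
tableaux, Kirillov–Reshetikhin crystals `B^{⊗λ}`, and the
Kerov–Kirillov–Reshetikhin style bijection `Φ` (whose algorithmic definition
via `δ` is far beyond the scope of this file) are packaged abstractly in the
structure `KRSetup`, whose fields record the previously–known properties of
these objects (`Φ` is a shape-preserving bijection between rigged
configurations valid for `λ` and elements of `B^{⊗λ}`, and is a classical
crystal isomorphism).
-/

namespace RCMLT

/-- The five families of finite simple Lie algebras considered in the paper:
`A n` is `A_n`, `B n` is `B_n`, `C n` is `C_n`, `D n` is `D_{n+1}`, and `G` is `G_2`. -/
inductive GType : Type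
  | A (n : ℕ)
  | B (n : ℕ)
  | C (n : ℕ)
  | D (n : ℕ)   -- this stands for `D_{n+1}`
  | G
deriving DecidableEq

/-- The number of nodes of the Dynkin diagram, so that the index set is
`I = Fin (rank g)` (the element `a : Fin (rank g)` represents the node `a+1`
in the paper's indexing). -/
def rank : GType → ℕ
  | .A n => n
  | .B n => n
  | .C n => n
  | .D n => n + 1
  | .G => 2

/-- Entries of the Cartan matrix of a simply laced chain (type `A`). -/
def chainE (a b : ℕ) : ℤ :=
  if a = b then 2 else if a + 1 = b ∨ b + 1 = a then -1 else 0

/-- The Cartan matrix `A_{ab} = ⟨h_a, α_b⟩` of `g`. -/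
def cartan : (g : GType) → Fin (rank g) → Fin (rank g) → ℤ
  | .A _, a, b => chainE a.val b.val
  | .B n, a, b => if a.val = n - 1 ∧ b.val = n - 2 ∧ 2 ≤ n then -2 else chainE a.val b.val
  | .C n, a, b => if a.val = n - 2 ∧ b.val = n - 1 ∧ 2 ≤ n then -2 else chainE a.val b.val
  | .D n, a, b =>
      if ((a.val = n - 2 ∧ b.val = n) ∨ (a.val = n ∧ b.val = n - 2)) ∧ 2 ≤ n then -1
      else if a.val = n ∨ b.val = n then (if a = b then 2 else 0)
      else chainE a.val b.val
  | .G, a, b => if a = b then 2 else if a.val = 0 then -3 else -1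

/-- Integral weights, written in the coordinates of the fundamental weights:
`λ : Wt g` stands for `Σ_a (λ a) Λ_a`, so that `⟨h_a, λ⟩ = λ a`. -/
abbrev Wt (g : GType) := Fin (rank g) → ℤ

/-- A rigged configuration `(ν, J)`: for each node `a`, the multiset of
strings `(i, x)` (a part of length `i` of the partition `ν^{(a)}` together
with its rigging `x`) of `(ν, J)^{(a)}`. -/
abbrev Cfg (g : GType) := Fin (rank g) → Multiset (ℕ × ℤ)

/-- The empty rigged configuration `(ν_∅, J_∅)`. -/
def emptyCfg (g : GType) : Cfg g := fun _ => 0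

/-- The coordinate vector of the fundamental weight `Λ_r`. -/
def fw (g : GType) (r : Fin (rank g)) : Wt g := fun b => if b = r then 1 else 0

/-- `λ` is dominant: all coefficients in the fundamental weights are `≥ 0`. -/
def Dominant (g : GType) (lam : Wt g) : Prop := ∀ a, 0 ≤ lam a

/-- `|ν^{(a)}|`, the number of boxes of the partition recorded by `m`. -/
def psize (m : Multiset (ℕ × ℤ)) : ℤ := (m.map fun s => (s.1 : ℤ)).sum

/-- The vacancy numbers
`p_i^{(a)}(ν; λ) = ⟨h_a, λ⟩ − Σ_{(b,j)} A_{ab} min(i,j) m_j^{(b)}`. -/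
def vac (g : GType) (lam : Wt g) (ν : Cfg g) (a : Fin (rank g)) (i : ℕ) : ℤ :=
  lam a - ∑ b, cartan g a b * ((ν b).map fun s => ((min i s.1 : ℕ) : ℤ)).sum

/-- `(ν, J)` is valid for `λ`: every rigging `x` of a string of length `i` in
`ν^{(a)}` satisfies `x ≤ p_i^{(a)}(ν; λ)`. -/
def Valid (g : GType) (lam : Wt g) (ν : Cfg g) : Prop :=
  ∀ a : Fin (rank g), ∀ s ∈ ν a, s.2 ≤ vac g lam ν a s.1

/-- The Kashiwara lowering operator `f_a` on rigged configurations, as a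
relation: `fRel g a ν ν'` holds iff `f_a (ν, J) = (ν', J')`.  Let `x` be the
smallest rigging in `(ν,J)^{(a)}`.  If `x > 0` (in particular if `ν^{(a)}` is
empty) a string `(1, -1)` is added; otherwise a string `(ℓ, x)` with `ℓ`
maximal is replaced by `(ℓ+1, x-1)`.  All the other riggings are changed so
that all colabels `p_i^{(b)} − x` remain fixed (the colabel differences do
not depend on the weight, so they are computed at weight `0`). -/
def fRel (g : GType) (a : Fin (rank g)) (ν ν' : Cfg g) : Prop :=
  ((∀ s ∈ ν a, 0 < s.2) ∧
     (∀ b, b ≠ a →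
       ν' b = (ν b).map fun s =>
         (s.1, s.2 + vac g (0 : Wt g) ν' b s.1 - vac g (0 : Wt g) ν b s.1)) ∧
     ν' a = (1, -1) ::ₘ ((ν a).map fun s =>
         (s.1, s.2 + vac g (0 : Wt g) ν' a s.1 - vac g (0 : Wt g) ν a s.1))) ∨
  (∃ (l : ℕ) (x : ℤ) (rest : Multiset (ℕ × ℤ)),
     x ≤ 0 ∧ ν a = (l, x) ::ₘ rest ∧
     (∀ s ∈ ν a, x ≤ s.2) ∧ (∀ s ∈ ν a, s.2 = x → s.1 ≤ l) ∧
     (∀ b, b ≠ a →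
       ν' b = (ν b).map fun s =>
         (s.1, s.2 + vac g (0 : Wt g) ν' b s.1 - vac g (0 : Wt g) ν b s.1)) ∧
     ν' a = (l + 1, x - 1) ::ₘ (rest.map fun s =>
         (s.1, s.2 + vac g (0 : Wt g) ν' a s.1 - vac g (0 : Wt g) ν a s.1)))

/-- The Kashiwara raising operator `e_a` on rigged configurations, as a
relation: `eRel g a ν ν'` holds iff `e_a (ν, J) = (ν', J') ≠ 0`.  If the
smallest rigging `x` in `(ν,J)^{(a)}` satisfies `x ≥ 0` then `e_a (ν,J) = 0`
(so no `ν'` is related to `ν`); otherwise a string `(ℓ, x)` with `ℓ` minimal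
is replaced by `(ℓ-1, x+1)` (removed if `ℓ = 1`), and all the other riggings
are changed so that all colabels remain fixed. -/
def eRel (g : GType) (a : Fin (rank g)) (ν ν' : Cfg g) : Prop :=
  ∃ (l : ℕ) (x : ℤ) (rest : Multiset (ℕ × ℤ)),
    x < 0 ∧ ν a = (l, x) ::ₘ rest ∧
    (∀ s ∈ ν a, x ≤ s.2) ∧ (∀ s ∈ ν a, s.2 = x → l ≤ s.1) ∧
    (∀ b, b ≠ a →
      ν' b = (ν b).map fun s =>
        (s.1, s.2 + vac g (0 : Wt g) ν' b s.1 - vac g (0 : Wt g) ν b s.1)) ∧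
    ν' a = (if l = 1 then (0 : Multiset (ℕ × ℤ)) else {(l - 1, x + 1)}) +
      (rest.map fun s =>
        (s.1, s.2 + vac g (0 : Wt g) ν' a s.1 - vac g (0 : Wt g) ν a s.1))

/-- `RC(∞)`: the set of rigged configurations generated from the empty rigged
configuration by the operators `f_a`. -/
inductive RCInf (g : GType) : Cfg g → Prop
  | empty : RCInf g (emptyCfg g)
  | step {a : Fin (rank g)} {ν ν' : Cfg g} : RCInf g ν → fRel g a ν ν' → RCInf g ν'

/-- `RC(λ)`: the closure of the empty rigged configuration under the modified
operators `f_a`, where `f_a (ν, J) = 0` whenever the result is not valid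
for `λ`. -/
inductive RCPoly (g : GType) (lam : Wt g) : Cfg g → Prop
  | empty : RCPoly g lam (emptyCfg g)
  | step {a : Fin (rank g)} {ν ν' : Cfg g} :
      RCPoly g lam ν → fRel g a ν ν' → Valid g lam ν' → RCPoly g lam ν'

/-- The dominant weight `λ_ν`:
`λ_ν = Σ_{a < n} (|ν^{(a)}|+1) Λ_a + λ_ν^{(n)}`, where the last part is
`2(|ν^{(n)}|+1) Λ_n` in type `B_n`,
`(max(|ν^{(n)}|, |ν^{(n+1)}|)+1)(Λ_n + Λ_{n+1})` in type `D_{n+1}`, and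
`(|ν^{(n)}|+1) Λ_n` otherwise. -/
def lambdaNu : (g : GType) → Cfg g → Wt g
  | .A _, ν => fun a => psize (ν a) + 1
  | .B n, ν => fun a => if a.val = n - 1 then 2 * (psize (ν a) + 1) else psize (ν a) + 1
  | .C _, ν => fun a => psize (ν a) + 1
  | .D n, ν => fun a =>
      if a.val = n - 1 ∨ a.val = n then
        max (psize (ν ⟨n - 1, by simp only [rank]; omega⟩))
            (psize (ν ⟨n, by simp only [rank]; omega⟩)) + 1
      else psize (ν a) + 1
  | .G, ν => fun a => psize (ν a) + 1

/-- `(ν, J, λ) ∈ RC^{EV}`: the representative `(ν, J)` lies in `RC(λ)` for a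
dominant weight `λ ≥ λ_ν` (componentwise in the fundamental-weight
coordinates). -/
def RCEV (g : GType) (ν : Cfg g) (lam : Wt g) : Prop :=
  Dominant g lam ∧ RCPoly g lam ν ∧ ∀ a, lambdaNu g ν a ≤ lam a

/-- The coordinates of `wt (ν, J) = −Σ_a |ν^{(a)}| α_a`:
`⟨h_b, wt (ν, J)⟩ = −Σ_a |ν^{(a)}| A_{ba}`. -/
def wtRC (g : GType) (ν : Cfg g) (b : Fin (rank g)) : ℤ :=
  -∑ a, psize (ν a) * cartan g b a

/-- `k`-fold iteration of the raising operator `e_a`. -/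
def eIter (g : GType) (a : Fin (rank g)) : ℕ → Cfg g → Cfg g → Prop
  | 0, ν, ν' => ν' = ν
  | k + 1, ν, ν'' => ∃ ν', eRel g a ν ν' ∧ eIter g a k ν' ν''

/-- `ε_a (ν, J) = max {k ≥ 0 | e_a^k (ν, J) ≠ 0}`. -/
noncomputable def epsRC (g : GType) (a : Fin (rank g)) (ν : Cfg g) : ℕ :=
  sSup {k : ℕ | ∃ μ, eIter g a k ν μ}

/-- `φ_a (ν, J) = ε_a (ν, J) + ⟨h_a, wt (ν, J)⟩`. -/
noncomputable def phiRC (g : GType) (a : Fin (rank g)) (ν : Cfg g) : ℤ :=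
  (epsRC g a ν : ℤ) + wtRC g ν a

/-- An abstract `U_q(g)`-crystal structure on a set `B`: maps
`e_a, f_a : B → B ⊔ {0}`, `ε_a, φ_a : B → ℤ` and `wt : B → P` (in
fundamental-weight coordinates) such that (1) `f_a b = b'` iff `b = e_a b'`;
(2) `wt (f_a b) = wt b − α_a` when `f_a b ≠ 0`; (3) `φ_a − ε_a = ⟨h_a, wt⟩`. -/
structure CrystalStruct (g : GType) (B : Type) where
  e : Fin (rank g) → B → Option B
  f : Fin (rank g) → B → Option B
  wt : B → Wt g
  eps : Fin (rank g) → B → ℤ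
  phi : Fin (rank g) → B → ℤ
  ef_iff : ∀ a b b', f a b = some b' ↔ e a b' = some b
  wt_f : ∀ a b b', f a b = some b' → ∀ c, wt b' c = wt b c - cartan g c a
  phi_eps : ∀ a b, phi a b - eps a b = wt b a

/-- Abstract packaging of the tableaux models (`⊔_{λ} B^{⊗λ}`, the large,
marginally large and semistandard tableaux inside it, basic columns) together
with the bijection `Φ : RC(B^{⊗λ}) → B^{⊗λ}` of
Kerov–Kirillov–Reshetikhin/Okado–Schilling–Shimozono type and its previously
known properties (it is a shape-preserving bijection and a classical crystal
isomorphism), and the marginally large tableaux crystal operators of `T(∞)`. -/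
structure KRSetup (g : GType) where
  /-- elements of `⊔_{λ ∈ P̂⁺} B^{⊗λ}` (tensor products of columns). -/
  Tab : Type
  /-- the weight `λ` with `t ∈ B^{⊗λ}`; for a tableau, its shape. -/
  shape : Tab → Wt g
  /-- the classical crystal operator `f_a` on `B^{⊗λ}`. -/
  ftab : Fin (rank g) → Tab → Option Tab
  /-- the classical crystal operator `e_a` on `B^{⊗λ}`. -/
  etab : Fin (rank g) → Tab → Option Tab
  /-- `t` is (the column reading of) a semistandard tableau. -/
  IsTableau : Tab → Prop
  /-- `t` is a large tableau. -/
  Large : Tab → Prop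
  /-- `t` is a marginally large tableau. -/
  MarginallyLarge : Tab → Prop
  /-- `t` and `t'` differ only by basic columns. -/
  BasicEquiv : Tab → Tab → Prop
  basicEquiv_equiv : Equivalence BasicEquiv
  ml_large : ∀ t, MarginallyLarge t → Large t
  /-- the highest weight tableau `T_λ` (a tensor product of basic columns). -/
  highest : Wt g → Tab
  highest_shape : ∀ lam, shape (highest lam) = lam
  highest_tab : ∀ lam, IsTableau (highest lam)
  /-- insertion of one additional basic column of height `r`. -/
  addBasic : Fin (rank g) → Tab → Tab
  addBasic_shape : ∀ r t, shape (addBasic r t) = shape t + fw g r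
  addBasic_equiv : ∀ r t, BasicEquiv (addBasic r t) t
  /-- the bijection `Φ : RC(B^{⊗λ}) → B^{⊗λ}`. -/
  Phi : Wt g → Cfg g → Tab
  /-- the inverse bijection `Φ⁻¹ : B^{⊗λ} → RC(B^{⊗λ})`. -/
  PhiInv : Wt g → Tab → Cfg g
  phi_shape : ∀ lam ν, Valid g lam ν → shape (Phi lam ν) = lam
  phiInv_valid : ∀ lam t, shape t = lam → Valid g lam (PhiInv lam t)
  phi_left_inv : ∀ lam ν, Valid g lam ν → PhiInv lam (Phi lam ν) = ν
  phi_right_inv : ∀ lam t, shape t = lam → Phi lam (PhiInv lam t) = t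
  /-- `Φ` is a classical crystal isomorphism (Theorem 4.6 of the paper). -/
  phi_f : ∀ lam a ν ν', Valid g lam ν → fRel g a ν ν' → Valid g lam ν' →
      ftab a (Phi lam ν) = some (Phi lam ν')
  phi_f_none : ∀ lam a ν ν', Valid g lam ν → fRel g a ν ν' → ¬ Valid g lam ν' →
      ftab a (Phi lam ν) = none
  phi_e : ∀ lam a ν ν', Valid g lam ν → eRel g a ν ν' →
      etab a (Phi lam ν) = some (Phi lam ν')
  phi_e_none : ∀ lam a ν, Valid g lam ν → ¬(∃ ν', eRel g a ν ν') →
      etab a (Phi lam ν) = none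
  /-- the (total) lowering operator `f_a` of the marginally large tableaux
  model `T(∞)`. -/
  fml : Fin (rank g) → Tab → Tab
  /-- the raising operator `e_a` of the marginally large tableaux model. -/
  eml : Fin (rank g) → Tab → Option Tab
  /-- the weight function of the marginally large tableaux model. -/
  wtml : Tab → Wt g
  epsml : Fin (rank g) → Tab → ℤ
  phiml : Fin (rank g) → Tab → ℤ
  /-- `f_a` on `T(∞)` agrees, up to basic columns, with `f_a` computed on a
  suitable large representative (Lemma 3.2 of Hong–Lee). -/
  fml_spec : ∀ a T, IsTableau T → MarginallyLarge T →
      MarginallyLarge (fml a T) ∧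
      ∃ T₁ T₂, BasicEquiv T₁ T ∧ ftab a T₁ = some T₂ ∧ BasicEquiv T₂ (fml a T)
  eml_spec : ∀ a T T', IsTableau T → MarginallyLarge T → eml a T = some T' →
      MarginallyLarge T' ∧
      ∃ T₁ T₂, BasicEquiv T₁ T ∧ etab a T₁ = some T₂ ∧ BasicEquiv T₂ T'
  phiml_eps : ∀ a T, phiml a T - epsml a T = wtml T a
  wtml_fml : ∀ a T c, wtml (fml a T) c = wtml T c - cartan g c a

/-- The map `Ψ : RC(∞) → T(∞)`: project `(ν, J)` to `RC(λ_ν)`, apply `Φ`,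
and regard the result as a marginally large tableau. -/
def KRSetup.Psi {g : GType} (S : KRSetup g) (ν : Cfg g) : S.Tab :=
  S.Phi (lambdaNu g ν) ν

/-- The map `Ξ : T(∞) → RC(∞)`: project `T` to `T(λ_T)` (where `λ_T` is the
shape of `T`), embed it in `B^{⊗λ_T}` as the tensor product of its columns,
and apply `Φ⁻¹`. -/
def KRSetup.Xi {g : GType} (S : KRSetup g) (T : S.Tab) : Cfg g :=
  S.PhiInv (S.shape T) T

/-- The connected component of `B^{⊗λ}` generated by the highest weight
element `T_λ`, i.e. the embedded copy of `T(λ)`. -/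
inductive TabGen {g : GType} (S : KRSetup g) (lam : Wt g) : S.Tab → Prop
  | base : TabGen S lam (S.highest lam)
  | step {a : Fin (rank g)} {T T' : S.Tab} :
      TabGen S lam T → S.ftab a T = some T' → TabGen S lam T'

/-- An abstract family of highest weight crystals `B(λ)` together with the
natural projections `p : B(λ) → B(μ) ⊔ {0}`, `f_{a_k} ⋯ f_{a_1} u_λ ↦
f_{a_k} ⋯ f_{a_1} u_μ`. -/
structure HWFamily (g : GType) where
  B : Wt g → Type
  crys : ∀ lam, CrystalStruct g (B lam)
  /-- the highest weight element `u_λ`. -/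
  hw : ∀ lam, B lam
  hw_e : ∀ lam a, (crys lam).e a (hw lam) = none
  hw_wt : ∀ lam, (crys lam).wt (hw lam) = lam
  /-- the natural projection `B(λ) → B(μ) ⊔ {0}`. -/
  proj : ∀ lam mu, B lam → Option (B mu)
  proj_hw : ∀ lam mu, proj lam mu (hw lam) = some (hw mu)
  proj_f : ∀ lam mu a b b', (crys lam).f a b = some b' →
      proj lam mu b' = ((proj lam mu b).bind ((crys mu).f a))

/-- An abstract model of `B(∞)` together with a family of highest weight
crystals `B(λ)` and the natural projections `B(∞) → B(λ) ⊔ {0}`. -/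
structure BInfSetup (g : GType) extends HWFamily g where
  Binf : Type
  icrys : CrystalStruct g Binf
  /-- the highest weight element `u_∞`. -/
  uinf : Binf
  uinf_e : ∀ a, icrys.e a uinf = none
  uinf_wt : ∀ b, icrys.wt uinf b = 0
  /-- the natural projection `B(∞) → B(λ) ⊔ {0}`. -/
  projInf : ∀ lam, Binf → Option (B lam)
  projInf_hw : ∀ lam, projInf lam uinf = some (hw lam)
  projInf_f : ∀ lam a b b', icrys.f a b = some b' →
      projInf lam b' = ((projInf lam b).bind ((crys lam).f a))

/-!
Let `χ` be the smallest rigging of `(ν, J)^{(a)}` and `ℓ` the longest length carrying it; when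
`χ > 0`, use instead the phantom string `(ℓ, χ) = (0, 0)`. The operator `f_a` grows `(ℓ, χ)` to
`(ℓ + 1, χ - 1)` and lowers `p_{ℓ+1}^{(a)}` by `A_{aa} = 2`, while every other string keeps its
colabel, so all that has to be shown is `χ + 1 ≤ p_{ℓ+1}^{(a)}(ν; λ)`.

Since the off-diagonal Cartan entries are `≤ 0`, `i ↦ p_i^{(a)}` is concave between consecutive
lengths of `ν^{(a)}`. We have `χ ≤ p_ℓ`; the next longer string of `ν^{(a)}`, of length `M`, has
rigging `≥ χ + 1`, hence `p_M ≥ χ + 1`, and concavity on `[ℓ, M]` gives `p_{ℓ+1} ≥ χ + 1`.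
If there is no longer string, take `M` large: then
`p_M = ⟨h_a, λ + wt⟩ ≥ |ν^{(a)}| + 1 + ⟨h_a, wt⟩`, and on `RC(λ)` the quantity
`|ν^{(a)}| + ⟨h_a, wt⟩` is bounded below by `min (0, χ)`, an invariant preserved by every `f_b`.
-/

theorem chainE_nonpos_of_ne {x y : ℕ} (h : x ≠ y) : chainE x y ≤ 0 := by
  unfold chainE
  split_ifs <;> omega

theorem cartan_self (g : GType) (a : Fin (rank g)) : cartan g a a = 2 := by
  cases g with
  | A n => simp [cartan, chainE]
  | B n | C n =>
    simp only [cartan]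
    rw [if_neg (by omega)]
    simp [chainE]
  | D n =>
    simp only [cartan]
    rw [if_neg (by omega)]
    split_ifs <;> simp_all [chainE]
  | G => simp [cartan]

theorem cartan_nonpos_of_ne (g : GType) {a b : Fin (rank g)} (h : a ≠ b) :
    cartan g a b ≤ 0 := by
  have hv : a.val ≠ b.val := Fin.val_ne_of_ne h
  cases g with
  | A n => exact chainE_nonpos_of_ne hv
  | B n | C n =>
    simp only [cartan]
    split_ifs
    · omega
    · exact chainE_nonpos_of_ne hv
  | D n =>
    simp only [cartan]
    split_ifs
    · omega
    · exact le_rfl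
    · exact chainE_nonpos_of_ne hv
  | G =>
    simp only [cartan]
    split_ifs <;> omega

def minSum (m : Multiset (ℕ × ℤ)) (i : ℕ) : ℤ :=
  (m.map fun s => ((min i s.1 : ℕ) : ℤ)).sum

theorem vac_eq (g : GType) (lam : Wt g) (ν : Cfg g) (a : Fin (rank g)) (i : ℕ) :
    vac g lam ν a i = lam a - ∑ b, cartan g a b * minSum (ν b) i := rfl

theorem minSum_cons (s : ℕ × ℤ) (m : Multiset (ℕ × ℤ)) (i : ℕ) :
    minSum (s ::ₘ m) i = ((min i s.1 : ℕ) : ℤ) + minSum m i := by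
  simp [minSum]

theorem minSum_map_rigging (m : Multiset (ℕ × ℤ)) (F : ℕ × ℤ → ℤ) (i : ℕ) :
    minSum (m.map fun s => (s.1, F s)) i = minSum m i := by
  simp [minSum]

theorem psize_cons (s : ℕ × ℤ) (m : Multiset (ℕ × ℤ)) : psize (s ::ₘ m) = s.1 + psize m := by
  simp [psize]

theorem psize_map_rigging (m : Multiset (ℕ × ℤ)) (F : ℕ × ℤ → ℤ) :
    psize (m.map fun s => (s.1, F s)) = psize m := by
  simp [psize]

theorem psize_nonneg (m : Multiset (ℕ × ℤ)) : 0 ≤ psize m :=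
  Multiset.sum_nonneg fun _ hx => by
    obtain ⟨s, -, rfl⟩ := Multiset.mem_map.1 hx
    exact Int.natCast_nonneg _

theorem minSum_eq_psize {m : Multiset (ℕ × ℤ)} {i : ℕ} (h : ∀ s ∈ m, s.1 ≤ i) :
    minSum m i = psize m :=
  congrArg Multiset.sum <| Multiset.map_congr rfl fun s hs => by rw [min_eq_right (h s hs)]

theorem minSum_add_minSum_le (m : Multiset (ℕ × ℤ)) (i : ℕ) :
    minSum m (i + 2) + minSum m i ≤ 2 * minSum m (i + 1) := by
  simp only [minSum, ← Multiset.sum_map_add, ← Multiset.sum_map_mul_left]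
  exact Multiset.sum_map_le_sum_map _ _ fun s _ => by omega

theorem minSum_add_minSum_eq {m : Multiset (ℕ × ℤ)} {i : ℕ} (h : ∀ s ∈ m, s.1 ≠ i + 1) :
    minSum m (i + 2) + minSum m i = 2 * minSum m (i + 1) := by
  simp only [minSum, ← Multiset.sum_map_add, ← Multiset.sum_map_mul_left]
  exact congrArg Multiset.sum <| Multiset.map_congr rfl fun s hs => by have := h s hs; omega

theorem vac_eq_lam_add (g : GType) (lam : Wt g) (ν : Cfg g) (a : Fin (rank g)) (i : ℕ) :
    vac g lam ν a i = lam a + vac g 0 ν a i := by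
  simp only [vac_eq, Pi.zero_apply]
  ring

theorem vac_zero (g : GType) (lam : Wt g) (ν : Cfg g) (a : Fin (rank g)) :
    vac g lam ν a 0 = lam a := by
  simp [vac_eq, minSum]

theorem vac_congr {g : GType} {ν ν' : Cfg g} (h : ∀ b i, minSum (ν' b) i = minSum (ν b) i)
    (lam : Wt g) (a : Fin (rank g)) (i : ℕ) : vac g lam ν' a i = vac g lam ν a i := by
  simp only [vac_eq, h]

theorem vac_eq_of_forall_le (g : GType) (lam : Wt g) (ν : Cfg g) (a : Fin (rank g)) {i : ℕ}
    (h : ∀ b, ∀ s ∈ ν b, s.1 ≤ i) : vac g lam ν a i = lam a + wtRC g ν a := by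
  simp only [vac_eq, wtRC, minSum_eq_psize (h _), mul_comm (cartan g a _)]
  ring

theorem exists_forall_length_le {g : GType} (ν : Cfg g) : ∃ N, ∀ b, ∀ s ∈ ν b, s.1 ≤ N :=
  ⟨Finset.univ.sup fun b => ((ν b).map Prod.fst).sup, fun b _ hs =>
    (Multiset.le_sup (Multiset.mem_map_of_mem _ hs)).trans
      (Finset.le_sup (f := fun b => ((ν b).map Prod.fst).sup) (Finset.mem_univ b))⟩

theorem vac_add_vac_le {g : GType} (lam : Wt g) (ν : Cfg g) (a : Fin (rank g)) {i : ℕ}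
    (h : ∀ s ∈ ν a, s.1 ≠ i + 1) :
    vac g lam ν a (i + 2) + vac g lam ν a i ≤ 2 * vac g lam ν a (i + 1) := by
  have hsum : 2 * ∑ b, cartan g a b * minSum (ν b) (i + 1) ≤
      ∑ b, cartan g a b * minSum (ν b) (i + 2) + ∑ b, cartan g a b * minSum (ν b) i := by
    rw [Finset.mul_sum, ← Finset.sum_add_distrib]
    refine Finset.sum_le_sum fun b _ => ?_
    rw [← mul_add, mul_left_comm]
    rcases eq_or_ne a b with rfl | hb
    · rw [minSum_add_minSum_eq h]
    · exact mul_le_mul_of_nonpos_left (minSum_add_minSum_le _ _) (cartan_nonpos_of_ne g hb)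
  simp only [vac_eq]
  linarith

theorem add_one_le_of_concave {p : ℕ → ℤ} {l M : ℕ} {χ : ℤ} (hlM : l < M)
    (hconc : ∀ i, l ≤ i → i + 2 ≤ M → p (i + 2) + p i ≤ 2 * p (i + 1))
    (hl : χ ≤ p l) (hM : χ + 1 ≤ p M) : χ + 1 ≤ p (l + 1) := by
  by_contra! hfirst
  have hdesc : ∀ j, l ≤ j → j + 1 ≤ M → p (j + 1) ≤ p j ∧ p (j + 1) ≤ p (l + 1) := by
    intro j hj
    induction j, hj using Nat.le_induction with
    | base => exact fun _ => ⟨by omega, le_rfl⟩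
    | succ j hj ih =>
      intro hjM
      obtain ⟨ih₁, ih₂⟩ := ih (by omega)
      have := hconc j hj (by omega)
      exact ⟨by linarith, by linarith⟩
  obtain ⟨k, rfl⟩ : ∃ k, M = k + 1 := ⟨M - 1, by omega⟩
  linarith [(hdesc k (by omega) le_rfl).2]

theorem add_one_le_vac_succ {g : GType} {lam : Wt g} {ν : Cfg g} {a : Fin (rank g)}
    (hval : Valid g lam ν) (hlam : psize (ν a) + 1 ≤ lam a) {l : ℕ} {χ : ℤ}
    (hwt : χ ≤ psize (ν a) + wtRC g ν a) (hl : χ ≤ vac g lam ν a l)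
    (hmin : ∀ s ∈ ν a, χ ≤ s.2) (hmax : ∀ s ∈ ν a, s.2 = χ → s.1 ≤ l) :
    χ + 1 ≤ vac g lam ν a (l + 1) := by
  obtain ⟨M, hlM, hgap, hM⟩ : ∃ M, l < M ∧ (∀ s ∈ ν a, l < s.1 → M ≤ s.1) ∧
      χ + 1 ≤ vac g lam ν a M := by
    by_cases hlong : ∃ s ∈ ν a, l < s.1
    · obtain ⟨s₀, hs₀, hls₀⟩ := hlong
      have hs₀' : s₀ ∈ (ν a).filter fun s => l < s.1 := Multiset.mem_filter.2 ⟨hs₀, hls₀⟩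
      obtain ⟨q, hq, hqmin⟩ := Multiset.exists_min_image Prod.fst
        (s := (ν a).filter fun s => l < s.1) (by rintro h; simp [h] at hs₀')
      obtain ⟨hqmem, hlq⟩ := Multiset.mem_filter.1 hq
      refine ⟨q.1, hlq, fun s hs hls => hqmin s (Multiset.mem_filter.2 ⟨hs, hls⟩), ?_⟩
      have hqχ : q.2 ≠ χ := fun h => absurd (hmax q hqmem h) (by omega)
      linarith [lt_of_le_of_ne (hmin q hqmem) hqχ.symm, hval a q hqmem]
    · push Not at hlong
      obtain ⟨N, hN⟩ := exists_forall_length_le ν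
      refine ⟨max N (l + 1), by omega, fun s hs hls => absurd (hlong s hs) (by omega), ?_⟩
      rw [vac_eq_of_forall_le g lam ν a fun b s hs => (hN b s hs).trans (le_max_left _ _)]
      linarith
  refine add_one_le_of_concave hlM (fun i hi hiM => vac_add_vac_le lam ν a ?_) hl hM
  intro s hs hsi
  have := hgap s hs
  omega

def MinRiggingBound (g : GType) (ν : Cfg g) : Prop :=
  ∀ b, 0 ≤ psize (ν b) + wtRC g ν b ∨ ∃ s ∈ ν b, s.2 ≤ psize (ν b) + wtRC g ν b

def keepColabel (g : GType) (ν ν' : Cfg g) (b : Fin (rank g)) : ℕ × ℤ → ℕ × ℤ :=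
  fun s => (s.1, s.2 + vac g 0 ν' b s.1 - vac g 0 ν b s.1)

theorem keepColabel_le_vac {g : GType} {lam : Wt g} {ν ν' : Cfg g} {b : Fin (rank g)}
    {t : ℕ × ℤ} (ht : t.2 ≤ vac g lam ν b t.1) :
    (keepColabel g ν ν' b t).2 ≤ vac g lam ν' b (keepColabel g ν ν' b t).1 := by
  rw [vac_eq_lam_add g lam ν] at ht
  simp only [keepColabel, vac_eq_lam_add g lam ν']
  linarith

/-- When `f_a` adds a new string `(1, -1)`, the growing string `(l, χ)` is the phantom `(0, 0)`. -/
structure Grows (g : GType) (a : Fin (rank g)) (ν ν' : Cfg g) (l : ℕ) (χ : ℤ) : Prop where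
  rigging_nonpos : χ ≤ 0
  mem_or_phantom : (l, χ) ∈ ν a ∨ l = 0
  le_rigging : ∀ s ∈ ν a, χ ≤ s.2
  length_le : ∀ s ∈ ν a, s.2 = χ → s.1 ≤ l
  eq_cons : ∃ rest ≤ ν a, ν' a = (l + 1, χ - 1) ::ₘ rest.map (keepColabel g ν ν' a)
  eq_map : ∀ b ≠ a, ν' b = (ν b).map (keepColabel g ν ν' b)
  minSum_eq : ∀ i, minSum (ν' a) i = minSum (ν a) i + if l < i then 1 else 0
  psize_eq : psize (ν' a) = psize (ν a) + 1

theorem fRel.exists_grows {g : GType} {a : Fin (rank g)} {ν ν' : Cfg g} (hf : fRel g a ν ν') :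
    ∃ l χ, Grows g a ν ν' l χ := by
  rcases hf with ⟨hpos, hmap, hcons⟩ | ⟨l, χ, rest, hχ, hν, hmin, hmax, hmap, hcons⟩
  · refine ⟨0, 0, le_rfl, Or.inr rfl, fun s hs => (hpos s hs).le,
      fun s hs h => absurd h (hpos s hs).ne', ⟨ν a, le_rfl, hcons⟩, hmap, fun i => ?_, ?_⟩
    · simp only [hcons, minSum_cons, minSum_map_rigging]
      split_ifs <;> omega
    · simp only [hcons, psize_cons, psize_map_rigging]
      push_cast
      ring
  · refine ⟨l, χ, hχ, Or.inl (hν ▸ Multiset.mem_cons_self _ _), hmin, hmax,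
      ⟨rest, hν ▸ Multiset.le_cons_self _ _, hcons⟩, hmap, fun i => ?_, ?_⟩
    · simp only [hcons, hν, minSum_cons, minSum_map_rigging]
      split_ifs <;> omega
    · simp only [hcons, hν, psize_cons, psize_map_rigging]
      push_cast
      ring

namespace Grows

variable {g : GType} {a : Fin (rank g)} {ν ν' : Cfg g} {l : ℕ} {χ : ℤ}

theorem minSum_eq_ite (hg : Grows g a ν ν' l χ) (b : Fin (rank g)) (i : ℕ) :
    minSum (ν' b) i = minSum (ν b) i + if b = a then (if l < i then 1 else 0) else 0 := by
  rcases eq_or_ne b a with rfl | hb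
  · simp [hg.minSum_eq]
  · rw [hg.eq_map b hb, if_neg hb, add_zero]
    exact minSum_map_rigging _ _ _

theorem psize_eq_ite (hg : Grows g a ν ν' l χ) (b : Fin (rank g)) :
    psize (ν' b) = psize (ν b) + if b = a then 1 else 0 := by
  rcases eq_or_ne b a with rfl | hb
  · simp [hg.psize_eq]
  · rw [hg.eq_map b hb, if_neg hb, add_zero]
    exact psize_map_rigging _ _

theorem vac_eq (hg : Grows g a ν ν' l χ) (lam : Wt g) (b : Fin (rank g)) (i : ℕ) :
    vac g lam ν' b i = vac g lam ν b i - cartan g b a * if l < i then 1 else 0 := by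
  simp only [RCMLT.vac_eq, hg.minSum_eq_ite, mul_add, Finset.sum_add_distrib, mul_ite, mul_zero,
    Finset.sum_ite_eq', Finset.mem_univ, if_true]
  ring

theorem psize_add_wtRC (hg : Grows g a ν ν' l χ) (b : Fin (rank g)) :
    psize (ν' b) + wtRC g ν' b =
      psize (ν b) + wtRC g ν b + (if b = a then 1 else 0) - cartan g b a := by
  simp only [wtRC, hg.psize_eq_ite, add_mul, Finset.sum_add_distrib, ite_mul, one_mul, zero_mul,
    Finset.sum_ite_eq', Finset.mem_univ, if_true]
  ring

theorem le_psize_add_wtRC (hg : Grows g a ν ν' l χ) (hbound : MinRiggingBound g ν) :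
    χ ≤ psize (ν a) + wtRC g ν a := by
  rcases hbound a with h | ⟨s, hs, h⟩
  · linarith [hg.rigging_nonpos]
  · linarith [hg.le_rigging s hs]

theorem minRiggingBound (hg : Grows g a ν ν' l χ) (hbound : MinRiggingBound g ν) :
    MinRiggingBound g ν' := by
  intro b
  rw [hg.psize_add_wtRC]
  rcases eq_or_ne b a with rfl | hb
  · obtain ⟨rest, -, hcons⟩ := hg.eq_cons
    refine Or.inr ⟨_, hcons ▸ Multiset.mem_cons_self _ _, ?_⟩
    simp only [cartan_self, if_true]
    linarith [hg.le_psize_add_wtRC hbound]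
  · have hA := cartan_nonpos_of_ne g hb
    rw [if_neg hb]
    rcases hbound b with h | ⟨s, hs, h⟩
    · exact Or.inl (by linarith)
    · refine Or.inr ⟨_, hg.eq_map b hb ▸ Multiset.mem_map_of_mem _ hs, ?_⟩
      simp only [keepColabel, hg.vac_eq 0]
      split_ifs <;> linarith

theorem valid {lam : Wt g} (hg : Grows g a ν ν' l χ) (hval : Valid g lam ν)
    (hlam : psize (ν a) + 1 ≤ lam a) (hbound : MinRiggingBound g ν) : Valid g lam ν' := by
  intro b s hs
  rcases eq_or_ne b a with rfl | hb
  · obtain ⟨rest, hrest, hcons⟩ := hg.eq_cons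
    rw [hcons] at hs
    rcases Multiset.mem_cons.1 hs with hnew | hs
    · subst hnew
      have hl : χ ≤ vac g lam ν b l := by
        rcases hg.mem_or_phantom with hmem | hl0
        · exact hval b (l, χ) hmem
        · rw [hl0, vac_zero]
          linarith [psize_nonneg (ν b), hg.rigging_nonpos]
      have := add_one_le_vac_succ hval hlam (hg.le_psize_add_wtRC hbound) hl hg.le_rigging
        hg.length_le
      simp only [hg.vac_eq, cartan_self, lt_add_one, if_true]
      linarith
    · obtain ⟨t, ht, rfl⟩ := Multiset.mem_map.1 hs
      exact keepColabel_le_vac (hval b t (Multiset.mem_of_le hrest ht))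
  · rw [hg.eq_map b hb] at hs
    obtain ⟨t, ht, rfl⟩ := Multiset.mem_map.1 hs
    exact keepColabel_le_vac (hval b t ht)

end Grows

theorem RCPoly.valid {g : GType} {lam : Wt g} {ν : Cfg g} (h : RCPoly g lam ν) :
    Valid g lam ν := by
  cases h with
  | empty => simp [Valid, emptyCfg]
  | step _ _ hv => exact hv

theorem RCPoly.minRiggingBound {g : GType} {lam : Wt g} {ν : Cfg g} (h : RCPoly g lam ν) :
    MinRiggingBound g ν := by
  induction h with
  | empty => simp [MinRiggingBound, wtRC, emptyCfg, psize]
  | step _ hf _ ih =>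
    obtain ⟨l, χ, hg⟩ := hf.exists_grows
    exact hg.minRiggingBound ih

/-- Since the new vacancy numbers depend only on the new lengths, `ν'` can be defined through the
configuration `κ` with those lengths and the old riggings. -/
theorem exists_keepColabel {g : GType} (a : Fin (rank g)) (ν : Cfg g) (s : ℕ × ℤ)
    (rest : Multiset (ℕ × ℤ)) :
    ∃ ν' : Cfg g, (∀ b ≠ a, ν' b = (ν b).map (keepColabel g ν ν' b)) ∧
      ν' a = s ::ₘ rest.map (keepColabel g ν ν' a) := by
  classical
  let κ : Cfg g := Function.update ν a (s ::ₘ rest)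
  let ν' : Cfg g := Function.update (fun b => (ν b).map (keepColabel g ν κ b)) a
    (s ::ₘ rest.map (keepColabel g ν κ a))
  have hκa : κ a = s ::ₘ rest := Function.update_self _ _ _
  have hκb : ∀ b ≠ a, κ b = ν b := fun b hb => Function.update_of_ne hb _ _
  have hν'a : ν' a = s ::ₘ rest.map (keepColabel g ν κ a) := Function.update_self _ _ _
  have hν'b : ∀ b ≠ a, ν' b = (ν b).map (keepColabel g ν κ b) := fun b hb =>
    Function.update_of_ne hb _ _
  have hvac : ∀ b i, vac g 0 ν' b i = vac g 0 κ b i := by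
    refine vac_congr (fun b i => ?_) 0
    rcases eq_or_ne b a with rfl | hb
    · rw [hν'a, hκa, minSum_cons, minSum_cons]
      exact congrArg _ (minSum_map_rigging _ _ _)
    · rw [hν'b b hb, hκb b hb]
      exact minSum_map_rigging _ _ _
  have hkeep : keepColabel g ν ν' = keepColabel g ν κ := by
    funext b t
    simp only [keepColabel, hvac]
  exact ⟨ν', fun b hb => hkeep ▸ hν'b b hb, hkeep ▸ hν'a⟩

theorem exists_fRel (g : GType) (a : Fin (rank g)) (ν : Cfg g) : ∃ ν', fRel g a ν ν' := by
  classical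
  by_cases hpos : ∀ s ∈ ν a, 0 < s.2
  · obtain ⟨ν', hmap, hcons⟩ := exists_keepColabel a ν (1, -1) (ν a)
    exact ⟨ν', Or.inl ⟨hpos, hmap, hcons⟩⟩
  push Not at hpos
  obtain ⟨s₀, hs₀, hs₀χ⟩ := hpos
  obtain ⟨p, hp, hpmin⟩ := Multiset.exists_min_image Prod.snd (s := ν a)
    (by rintro h; simp [h] at hs₀)
  have hpmem : p ∈ (ν a).filter (·.2 = p.2) := Multiset.mem_filter.2 ⟨hp, rfl⟩
  obtain ⟨q, hq, hqmax⟩ := Multiset.exists_max_image Prod.fst (s := (ν a).filter (·.2 = p.2))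
    (by rintro h; simp [h] at hpmem)
  obtain ⟨hqmem, hqp⟩ := Multiset.mem_filter.1 hq
  obtain ⟨ν', hmap, hcons⟩ := exists_keepColabel a ν (q.1 + 1, q.2 - 1) ((ν a).erase q)
  refine ⟨ν', Or.inr ⟨q.1, q.2, (ν a).erase q, by linarith [hpmin s₀ hs₀],
    (Multiset.cons_erase hqmem).symm, fun s hs => hqp ▸ hpmin s hs,
    fun s hs hsq => hqmax s (Multiset.mem_filter.2 ⟨hs, hsq.trans hqp⟩), hmap, hcons⟩⟩

theorem add_one_le_lambdaNu (g : GType) (ν : Cfg g) (a : Fin (rank g)) :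
    psize (ν a) + 1 ≤ lambdaNu g ν a := by
  cases g with
  | A n | C n | G => simp [lambdaNu]
  | B n =>
    simp only [lambdaNu]
    split_ifs
    · linarith [psize_nonneg (ν a)]
    · exact le_rfl
  | D n =>
    simp only [lambdaNu]
    split_ifs with h
    · rcases h with h | h
      · rw [congrArg ν (Fin.ext h : a = ⟨n - 1, _⟩)]
        gcongr
        exact le_max_left _ _
      · rw [congrArg ν (Fin.ext h : a = ⟨n, _⟩)]
        gcongr
        exact le_max_right _ _
    · exact le_rfl

/-- if `(ν, J, λ) ∈ RC^{EV}` then `f_a (ν, J) ≠ 0` in `RC(λ)`: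
applying the lowering operator `f_a` to an extra valid rigged configuration
produces a rigged configuration which is still valid for `λ`. -/
theorem f_nonzero_on_extra_valid (g : GType) (a : Fin (rank g)) (ν : Cfg g)
    (lam : Wt g) (h : RCEV g ν lam) :
    (∃ ν', fRel g a ν ν') ∧ ∀ ν', fRel g a ν ν' → Valid g lam ν' := by
  obtain ⟨-, hpoly, hge⟩ := h
  refine ⟨exists_fRel g a ν, fun ν' hf => ?_⟩
  obtain ⟨l, χ, hg⟩ := hf.exists_grows
  exact hg.valid hpoly.valid ((add_one_le_lambdaNu g ν a).trans (hge a)) hpoly.minRiggingBound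

end RCMLT
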